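/- Let c₁ = log(2^{1/2}·3^{1/3}·5^{1/5}·30^{-1/30}) be Chebyshev's constant. For every real number x ≥ 30, the Chebyshev function satisfies ψ(x) < (6/5)·c₁·x + (5/(4·log 6))·(log x)² + (5/4)·log(x) + 1. -/

import Mathlib

open Real

/-- Chebyshev's constant `c₁ = log(2^{1/2}·3^{1/3}·5^{1/5}·30^{-1/30})`. -/
noncomputable def chebyshevC₁ : ℝ :=
  Real.log ((2 : ℝ) ^ ((1 : ℝ)/2) * (3 : ℝ) ^ ((1 : ℝ)/3) *
    (5 : ℝ) ^ ((1 : ℝ)/5) * (30 : ℝ) ^ (-(1 : ℝ)/30))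

/-- Chebyshev's constant `c₂ = (6/5)·c₁`. -/
noncomputable def chebyshevC₂ : ℝ := (6/5) * chebyshevC₁

/-- The second Chebyshev function `ψ(x) = ∑_{n ≤ x} Λ(n)`,
where `Λ` is the von Mangoldt function. -/
noncomputable def chebyshevPsi (x : ℝ) : ℝ :=
  ∑ n ∈ Finset.Iic ⌊x⌋₊, ArithmeticFunction.vonMangoldt n

/-!
Chebyshev's method. The weight `⌊m⌋ - ⌊m/2⌋ - ⌊m/3⌋ - ⌊m/5⌋ + ⌊m/30⌋` takes values in
`{0, 1}` and equals `1` for `1 ≤ m < 6`, so Legendre's identity `log N! = ∑_d Λ(d) ⌊N/d⌋` gives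
`ψ(x) - ψ(x/6) ≤ log ⌊x⌋! - log ⌊x/2⌋! - log ⌊x/3⌋! - log ⌊x/5⌋! + log ⌊x/30⌋!`.
By Stirling's bounds the right side is at most `c₁x + (5/2) log x` once `x ≥ 30`.
The bound `B(x)` of the theorem satisfies `B(x/6) + c₁x + (5/2) log x = B(x)` exactly, so
`ψ < B` propagates by induction on `⌊x⌋` from `[1, 30)`, where
`ψ(n) = log lcm(1, …, n) ≤ n log 3 ≤ (6/5) c₁ n`.
-/

open Finset Chebyshev
open scoped Nat
open ArithmeticFunction hiding log

theorem log_factorial_eq_sum_vonMangoldt (N : ℕ) :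
    log (N ! : ℝ) = ∑ d ∈ Ioc 0 N, Λ d * (N / d : ℕ) := by
  have hlog : log (N ! : ℝ) = ∑ n ∈ Ioc 0 N, log (n : ℝ) := by
    induction N with
    | zero => simp
    | succ N ih =>
      rw [Nat.factorial_succ, Nat.cast_mul, log_mul (by positivity) (by positivity), ih,
        sum_Ioc_succ_top (Nat.zero_le N), add_comm]
  rw [hlog, ← sum_Ioc_mul_zeta_eq_sum, vonMangoldt_mul_zeta]
  simp [ArithmeticFunction.log_apply]

theorem log_factorial_eq_sum_vonMangoldt_of_le {M N : ℕ} (h : M ≤ N) :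
    log (M ! : ℝ) = ∑ d ∈ Ioc 0 N, Λ d * (M / d : ℕ) := by
  rw [log_factorial_eq_sum_vonMangoldt]
  refine sum_subset (Ioc_subset_Ioc_right h) fun d hd hdM => ?_
  simp only [mem_Ioc, not_and, not_le] at hd hdM
  simp [Nat.div_eq_of_lt (hdM hd.1)]

def chebyshevWeight (m : ℕ) : ℤ :=
  m - (m / 2 : ℕ) - (m / 3 : ℕ) - (m / 5 : ℕ) + (m / 30 : ℕ)

theorem chebyshevWeight_nonneg (m : ℕ) : 0 ≤ chebyshevWeight m := by
  unfold chebyshevWeight; omega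

theorem chebyshevWeight_eq_one {m : ℕ} (h1 : 1 ≤ m) (h6 : m < 6) : chebyshevWeight m = 1 := by
  unfold chebyshevWeight; omega

theorem sum_vonMangoldt_mul_chebyshevWeight (N : ℕ) :
    ∑ d ∈ Ioc 0 N, Λ d * chebyshevWeight (N / d) =
      log (N ! : ℝ) - log ((N / 2) ! : ℝ) - log ((N / 3) ! : ℝ) - log ((N / 5) ! : ℝ)
        + log ((N / 30) ! : ℝ) := by
  simp only [log_factorial_eq_sum_vonMangoldt_of_le (Nat.div_le_self N _),
    log_factorial_eq_sum_vonMangoldt_of_le le_rfl, ← sum_sub_distrib, ← sum_add_distrib,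
    Nat.div_div_eq_div_mul, chebyshevWeight]
  refine sum_congr rfl fun d _ => ?_
  simp only [Int.cast_add, Int.cast_sub, Int.cast_natCast, Nat.mul_comm d]
  ring

theorem psi_sub_psi_div_six_le_sum (N : ℕ) :
    ψ N - ψ (N / 6 : ℕ) ≤ ∑ d ∈ Ioc 0 N, Λ d * chebyshevWeight (N / d) := by
  have hsplit : ψ N - ψ (N / 6 : ℕ) = ∑ d ∈ Ioc (N / 6) N, Λ d := by
    simp only [psi, Nat.floor_natCast]
    rw [← sum_Ioc_consecutive _ (Nat.zero_le _) (Nat.div_le_self N 6)]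
    ring
  rw [hsplit]
  calc ∑ d ∈ Ioc (N / 6) N, Λ d
      = ∑ d ∈ Ioc (N / 6) N, Λ d * chebyshevWeight (N / d) := by
        refine sum_congr rfl fun d hd => ?_
        rw [mem_Ioc] at hd
        rw [chebyshevWeight_eq_one ((Nat.one_le_div_iff (by omega)).2 hd.2)
          ((Nat.div_lt_iff_lt_mul (by omega)).2 (by omega))]
        simp
    _ ≤ ∑ d ∈ Ioc 0 N, Λ d * chebyshevWeight (N / d) :=
        sum_le_sum_of_subset_of_nonneg (Ioc_subset_Ioc_left (Nat.zero_le _)) fun d _ _ =>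
          mul_nonneg vonMangoldt_nonneg (by exact_mod_cast chebyshevWeight_nonneg _)

theorem log_factorial_le {n : ℕ} (hn : n ≠ 0) :
    log (n ! : ℝ) ≤ n * log n - n + log n / 2 + 1 := by
  obtain ⟨m, rfl⟩ := Nat.exists_eq_succ_of_ne_zero hn
  have hanti : log (Stirling.stirlingSeq (m + 1)) ≤ log (Stirling.stirlingSeq 1) :=
    Stirling.log_stirlingSeq'_antitone (Nat.zero_le m)
  rw [Stirling.log_stirlingSeq_formula, Stirling.stirlingSeq_one,
    log_div (exp_pos 1).ne' (by positivity), log_exp, log_sqrt (by norm_num),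
    log_mul (by norm_num) (by positivity), log_div (by positivity) (exp_pos 1).ne',
    log_exp] at hanti
  push_cast at hanti ⊢
  linarith

/-- The tangent line inequality for the convex function `y ↦ y log y - y` at `b`. -/
theorem mul_log_sub_self_add_le {a b : ℝ} (ha : 0 < a) (hb : 0 < b) :
    b * log b - b + (a - b) * log b ≤ a * log a - a := by
  have h := log_le_sub_one_of_pos (div_pos hb ha)
  rw [log_div hb.ne' ha.ne'] at h
  have h' : a * (log b - log a) ≤ b - a :=
    calc _ ≤ a * (b / a - 1) := mul_le_mul_of_nonneg_left h ha.le
      _ = b - a := by field_simp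
  linarith

theorem log_factorial_floor_le {y : ℝ} (hy : 1 ≤ y) :
    log (⌊y⌋₊ ! : ℝ) ≤ y * log y - y + log y / 2 + 1 := by
  set n := ⌊y⌋₊
  have hn : (1 : ℝ) ≤ n := by exact_mod_cast Nat.one_le_floor_iff _ |>.2 hy
  have hny : (n : ℝ) ≤ y := Nat.floor_le (by linarith)
  have hlog : log n ≤ log y := log_le_log (by linarith) hny
  have htangent := mul_log_sub_self_add_le (by linarith : 0 < y) (by linarith : (0 : ℝ) < n)
  have : 0 ≤ (y - n) * log n := mul_nonneg (by linarith) (log_nonneg hn)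
  linarith [log_factorial_le (n := n) (by exact_mod_cast (by linarith : (0 : ℝ) < n).ne')]

theorem le_log_factorial_floor {y : ℝ} (hy : 1 ≤ y) :
    y * log y - y - log y / 2 ≤ log (⌊y⌋₊ ! : ℝ) := by
  set n := ⌊y⌋₊
  have hn : (1 : ℝ) ≤ n := by exact_mod_cast Nat.one_le_floor_iff _ |>.2 hy
  have hyn : y < n + 1 := Nat.lt_floor_add_one y
  have hlog : log y ≤ log 2 + log n := by
    rw [← log_mul two_ne_zero (by linarith)]
    exact log_le_log (by linarith) (by linarith)
  have htangent := mul_log_sub_self_add_le (by linarith : (0 : ℝ) < n) (by linarith : 0 < y)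
  have : (n - y) * log y ≥ -log y := by nlinarith [log_nonneg hy]
  have h2π : log 2 ≤ log (2 * π) := log_le_log two_pos (by nlinarith [pi_gt_three])
  linarith [Stirling.le_log_factorial_stirling (n := n)
    (by exact_mod_cast (by linarith : (0 : ℝ) < n).ne')]

theorem log_thirty : log 30 = log 2 + log 3 + log 5 := by
  rw [show (30 : ℝ) = 2 * 3 * 5 by norm_num, log_mul (by norm_num) (by norm_num),
    log_mul (by norm_num) (by norm_num)]

theorem two_le_log_thirty : 2 ≤ log 30 := by
  rw [le_log_iff_exp_le (by norm_num), show (2 : ℝ) = 1 + 1 by norm_num, exp_add]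
  nlinarith [exp_one_lt_d9, exp_pos 1]

theorem chebyshevC₁_eq : chebyshevC₁ = log 2 / 2 + log 3 / 3 + log 5 / 5 - log 30 / 30 := by
  rw [chebyshevC₁, log_mul (by positivity) (by positivity),
    log_mul (by positivity) (by positivity), log_mul (by positivity) (by positivity),
    log_rpow (by norm_num), log_rpow (by norm_num), log_rpow (by norm_num),
    log_rpow (by norm_num)]
  ring

theorem chebyshevC₁_mul_eq {x : ℝ} (hx : 0 < x) :
    (x * log x - x) - (x / 2 * log (x / 2) - x / 2) - (x / 3 * log (x / 3) - x / 3)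
      - (x / 5 * log (x / 5) - x / 5) + (x / 30 * log (x / 30) - x / 30)
      = chebyshevC₁ * x := by
  simp only [log_div hx.ne' (by norm_num : (2 : ℝ) ≠ 0),
    log_div hx.ne' (by norm_num : (3 : ℝ) ≠ 0), log_div hx.ne' (by norm_num : (5 : ℝ) ≠ 0),
    log_div hx.ne' (by norm_num : (30 : ℝ) ≠ 0), chebyshevC₁_eq]
  ring

/-- `(6/5) c₁ = (14 log 2 + 9 log 3 + 5 log 5) / 25`, so this is `3^16 ≤ 2^14 · 5^5`. -/
theorem log_three_le_chebyshevC₁ : log 3 ≤ 6 / 5 * chebyshevC₁ := by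
  have h : log ((3 : ℝ) ^ 16) ≤ log ((2 : ℝ) ^ 14 * 5 ^ 5) :=
    log_le_log (by norm_num) (by norm_num)
  rw [log_mul (by norm_num) (by norm_num), log_pow, log_pow, log_pow] at h
  rw [chebyshevC₁_eq, log_thirty]
  push_cast at h
  linarith

theorem log_factorial_floor_combination_le {x : ℝ} (hx : 30 ≤ x) :
    log (⌊x⌋₊ ! : ℝ) - log (⌊x / 2⌋₊ ! : ℝ) - log (⌊x / 3⌋₊ ! : ℝ) - log (⌊x / 5⌋₊ ! : ℝ)
      + log (⌊x / 30⌋₊ ! : ℝ) ≤ chebyshevC₁ * x + 5 / 2 * log x := by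
  have hx0 : 0 < x := by linarith
  have hlog (k : ℝ) (hk : 0 < k) : log (x / k) = log x - log k := log_div hx0.ne' hk.ne'
  have := log_factorial_floor_le (by linarith : 1 ≤ x)
  have := le_log_factorial_floor (by linarith : 1 ≤ x / 2)
  have := le_log_factorial_floor (by linarith : 1 ≤ x / 3)
  have := le_log_factorial_floor (by linarith : 1 ≤ x / 5)
  have := log_factorial_floor_le (by linarith : 1 ≤ x / 30)
  have := chebyshevC₁_mul_eq hx0
  have := hlog 2 two_pos
  have := hlog 3 three_pos
  have := hlog 5 (by norm_num)
  have := hlog 30 (by norm_num)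
  -- the main terms cancel to `c₁x + (5/2) log x`, leaving the constant `2 - log 30 ≤ 0`
  linarith [log_thirty, two_le_log_thirty]

theorem psi_sub_psi_div_six_le {x : ℝ} (hx : 30 ≤ x) :
    ψ x - ψ (x / 6) ≤ chebyshevC₁ * x + 5 / 2 * log x := by
  have h := (psi_sub_psi_div_six_le_sum ⌊x⌋₊).trans_eq (sum_vonMangoldt_mul_chebyshevWeight _)
  rw [psi_eq_psi_coe_floor x, psi_eq_psi_coe_floor (x / 6)]
  simp only [← Nat.floor_div_ofNat] at h
  exact h.trans (log_factorial_floor_combination_le hx)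

theorem psi_le_log_three_mul {x : ℝ} (hx0 : 0 ≤ x) (hx : x < 30) : ψ x ≤ log 3 * x := by
  have hn : ⌊x⌋₊ < 30 := Nat.floor_lt hx0 |>.2 (by exact_mod_cast hx)
  have hlcm : ∀ n < 30, Nat.lcmUpto n ≤ 3 ^ n := by decide
  calc ψ x = log (Nat.lcmUpto ⌊x⌋₊) := by rw [psi_eq_psi_coe_floor, psi_eq_log_lcmUpto]
    _ ≤ log ((3 : ℝ) ^ ⌊x⌋₊) :=
        log_le_log (by exact_mod_cast Nat.lcmUpto_pos _) (by exact_mod_cast hlcm _ hn)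
    _ = log 3 * ⌊x⌋₊ := by rw [log_pow, mul_comm]
    _ ≤ log 3 * x := by gcongr; exact Nat.floor_le hx0

noncomputable def chebyshevBound (x : ℝ) : ℝ :=
  (6/5) * chebyshevC₁ * x + (5 / (4 * log 6)) * (log x) ^ 2 + (5/4) * log x + 1

theorem chebyshevBound_div_six_add {x : ℝ} (hx : 0 < x) :
    chebyshevBound (x / 6) + (chebyshevC₁ * x + 5 / 2 * log x) = chebyshevBound x := by
  have h6 : log 6 ≠ 0 := (log_pos (by norm_num)).ne'
  rw [chebyshevBound, chebyshevBound, log_div hx.ne' (by norm_num)]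
  field_simp
  ring

theorem mul_chebyshevC₁_lt_chebyshevBound {x : ℝ} (hx : 1 ≤ x) :
    6 / 5 * chebyshevC₁ * x < chebyshevBound x := by
  have := log_nonneg hx
  have : 0 < log 6 := log_pos (by norm_num)
  have : 0 ≤ 5 / (4 * log 6) * log x ^ 2 := by positivity
  unfold chebyshevBound
  linarith

theorem psi_lt_chebyshevBound {x : ℝ} (hx : 1 ≤ x) : ψ x < chebyshevBound x := by
  induction h : ⌊x⌋₊ using Nat.strong_induction_on generalizing x with
  | _ n ih =>
  rcases lt_or_ge x 30 with hx30 | hx30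
  · calc ψ x ≤ log 3 * x := psi_le_log_three_mul (by linarith) hx30
      _ ≤ 6 / 5 * chebyshevC₁ * x := by gcongr; exact log_three_le_chebyshevC₁
      _ < chebyshevBound x := mul_chebyshevC₁_lt_chebyshevBound hx
  · have hlt : ⌊x / 6⌋₊ < n := by
      rw [Nat.floor_div_ofNat, ← h]
      exact Nat.div_lt_self (Nat.floor_pos.2 (by linarith)) (by norm_num)
    calc ψ x ≤ ψ (x / 6) + (chebyshevC₁ * x + 5 / 2 * log x) := by
          linarith [psi_sub_psi_div_six_le hx30]
      _ < chebyshevBound (x / 6) + (chebyshevC₁ * x + 5 / 2 * log x) := by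
          gcongr; exact ih _ hlt (by linarith) rfl
      _ = chebyshevBound x := chebyshevBound_div_six_add (by linarith)

theorem chebyshevPsi_eq_psi (x : ℝ) : chebyshevPsi x = ψ x := by
  rw [chebyshevPsi, psi_eq_sum_Icc, ← Finset.Icc_bot]
  rfl

theorem chebyshevPsi_upper_bound (x : ℝ) (hx : 30 ≤ x) :
    chebyshevPsi x < (6/5) * chebyshevC₁ * x
      + (5 / (4 * Real.log 6)) * (Real.log x) ^ 2 + (5/4) * Real.log x + 1 := by
  rw [chebyshevPsi_eq_psi]
  exact psi_lt_chebyshevBound (by linarith)
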